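/- Let (Θ₁, μ₁) and (Θ₂, μ₂) be probability spaces and let ε₁, …, ε_T : Θ₁ × Θ₂ → ℝ be square-integrable with respect to μ₁ ⊗ μ₂, all having the same 'before' importance of θ₁: Var^b_{θ₁}(ε_t) = v for every t. Then the averaged error ε̄ = (1/T) Σ_{t=1}^T ε_t satisfies Var^b_{θ₁}(ε̄) ≤ v. -/

import Mathlib

/-!
By Fubini, `varB1 μ₁ μ₂ f` is the variance under `μ₁` of the marginal `θ₁ ↦ ∫ f (θ₁, θ₂) ∂μ₂`,
which is square integrable by Jensen and depends linearly on `f`. Since `2 cov[X, Y] ≤ Var X + Var Y`,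
the variance of a sum of `T` variables is at most `T` times the sum of their variances, so averaging
divides by `T²` a quantity at most `T² v`.
-/

open MeasureTheory Finset

/-- The 'before' importance of the first hyperparameter. -/
noncomputable def varB1 {Θ₁ Θ₂ : Type*} [MeasurableSpace Θ₁] [MeasurableSpace Θ₂]
    (μ₁ : Measure Θ₁) (μ₂ : Measure Θ₂) (f : Θ₁ × Θ₂ → ℝ) : ℝ :=
  ∫ θ₁, (∫ θ₂, f (θ₁, θ₂) ∂μ₂ - ∫ p, f p ∂(μ₁.prod μ₂)) ^ 2 ∂μ₁

open ProbabilityTheory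

section Variance

variable {Ω : Type*} [MeasurableSpace Ω] {μ : Measure Ω} [IsFiniteMeasure μ]

theorem two_mul_covariance_le_variance_add {X Y : Ω → ℝ} (hX : MemLp X 2 μ) (hY : MemLp Y 2 μ) :
    2 * cov[X, Y; μ] ≤ Var[X; μ] + Var[Y; μ] := by
  have hXY := variance_nonneg (X - Y) μ
  rw [variance_sub hX hY] at hXY
  linarith

theorem variance_sum_le_card_mul {ι : Type*} {s : Finset ι} {X : ι → Ω → ℝ}
    (hX : ∀ i ∈ s, MemLp (X i) 2 μ) :
    Var[fun ω ↦ ∑ i ∈ s, X i ω; μ] ≤ #s * ∑ i ∈ s, Var[X i; μ] := by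
  rw [variance_fun_sum' hX]
  calc ∑ i ∈ s, ∑ j ∈ s, cov[X i, X j; μ]
      ≤ ∑ i ∈ s, ∑ j ∈ s, (Var[X i; μ] + Var[X j; μ]) / 2 := by
        gcongr with i hi j hj
        linarith [two_mul_covariance_le_variance_add (hX i hi) (hX j hj)]
    _ = #s * ∑ i ∈ s, Var[X i; μ] := by
        simp only [add_div, sum_add_distrib, sum_const, nsmul_eq_mul, ← sum_div, ← mul_sum]
        ring

end Variance

theorem sq_integral_le_integral_sq {α : Type*} [MeasurableSpace α] {μ : Measure α}
    [IsProbabilityMeasure μ] {f : α → ℝ} (hf : Integrable f μ)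
    (hf2 : Integrable (fun x ↦ f x ^ 2) μ) :
    (∫ x, f x ∂μ) ^ 2 ≤ ∫ x, f x ^ 2 ∂μ :=
  (even_two.convexOn_pow (𝕜 := ℝ)).map_integral_le (continuous_pow 2).continuousOn
    isClosed_univ (Filter.Eventually.of_forall fun _ ↦ trivial) hf hf2

section Marginal

variable {α β : Type*} [MeasurableSpace α] [MeasurableSpace β] {μ : Measure α} {ν : Measure β}

theorem MeasureTheory.MemLp.integral_prod_left_two [IsFiniteMeasure μ] [IsProbabilityMeasure ν]
    {f : α × β → ℝ} (hf : MemLp f 2 (μ.prod ν)) : MemLp (fun x ↦ ∫ y, f (x, y) ∂ν) 2 μ := by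
  have hf1 : Integrable f (μ.prod ν) := hf.integrable one_le_two
  have hf2 : Integrable (fun p ↦ f p ^ 2) (μ.prod ν) := hf.integrable_sq
  refine (memLp_two_iff_integrable_sq hf.aestronglyMeasurable.integral_prod_right').2 <|
    hf2.integral_prod_left.mono' (hf.aestronglyMeasurable.integral_prod_right'.pow 2) ?_
  filter_upwards [hf1.prod_right_ae, hf2.prod_right_ae] with x hx1 hx2
  rw [Real.norm_of_nonneg (sq_nonneg _)]
  exact sq_integral_le_integral_sq hx1 hx2

theorem integral_finsetSum_prod_right_ae [SFinite μ] [SFinite ν] {ι : Type*} {s : Finset ι}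
    {f : ι → α × β → ℝ} (hf : ∀ i ∈ s, Integrable (f i) (μ.prod ν)) :
    (fun x ↦ ∫ y, ∑ i ∈ s, f i (x, y) ∂ν) =ᵐ[μ] fun x ↦ ∑ i ∈ s, ∫ y, f i (x, y) ∂ν := by
  have hslices : ∀ᵐ x ∂μ, ∀ i ∈ s, Integrable (fun y ↦ f i (x, y)) ν :=
    (ae_ball_iff s.countable_toSet).2 fun i hi ↦ (hf i hi).prod_right_ae
  filter_upwards [hslices] with x hx
  exact integral_finsetSum s hx

end Marginal

theorem varB1_eq_variance {Θ₁ Θ₂ : Type*} [MeasurableSpace Θ₁] [MeasurableSpace Θ₂]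
    {μ₁ : Measure Θ₁} {μ₂ : Measure Θ₂} [SFinite μ₁] [SFinite μ₂] {f : Θ₁ × Θ₂ → ℝ}
    (hf : Integrable f (μ₁.prod μ₂)) :
    varB1 μ₁ μ₂ f = Var[fun θ₁ ↦ ∫ θ₂, f (θ₁, θ₂) ∂μ₂; μ₁] := by
  rw [variance_eq_integral hf.aestronglyMeasurable.integral_prod_right'.aemeasurable,
    ← integral_prod f hf, varB1]

theorem varB1_average_le
    {Θ₁ Θ₂ : Type*} [MeasurableSpace Θ₁] [MeasurableSpace Θ₂]
    (μ₁ : Measure Θ₁) (μ₂ : Measure Θ₂)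
    [IsProbabilityMeasure μ₁] [IsProbabilityMeasure μ₂]
    (T : ℕ) (hT : 0 < T) (ε : Fin T → Θ₁ × Θ₂ → ℝ)
    (hε : ∀ t, MemLp (ε t) 2 (μ₁.prod μ₂))
    (v : ℝ) (hvar : ∀ t, varB1 μ₁ μ₂ (ε t) = v) :
    varB1 μ₁ μ₂ (fun p => (1 / (T : ℝ)) * ∑ t : Fin T, ε t p) ≤ v := by
  have hint : ∀ t, Integrable (ε t) (μ₁.prod μ₂) := fun t ↦ (hε t).integrable one_le_two
  set g : Fin T → Θ₁ → ℝ := fun t θ₁ ↦ ∫ θ₂, ε t (θ₁, θ₂) ∂μ₂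
  have hg : ∀ t, Var[g t; μ₁] = v := fun t ↦ (varB1_eq_variance (hint t)).symm.trans (hvar t)
  have hmarginal : varB1 μ₁ μ₂ (fun p => (1 / (T : ℝ)) * ∑ t : Fin T, ε t p)
      = Var[fun θ₁ ↦ (1 / (T : ℝ)) * ∑ t, g t θ₁; μ₁] := by
    rw [varB1_eq_variance ((integrable_finsetSum _ fun t _ ↦ hint t).const_mul _)]
    refine variance_congr ?_
    filter_upwards [integral_finsetSum_prod_right_ae fun t _ ↦ hint t] with θ₁ h
    rw [integral_const_mul, h]
  have hT' : (0 : ℝ) < T := by exact_mod_cast hT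
  calc varB1 μ₁ μ₂ (fun p => (1 / (T : ℝ)) * ∑ t : Fin T, ε t p)
      = (1 / (T : ℝ)) ^ 2 * Var[fun θ₁ ↦ ∑ t, g t θ₁; μ₁] := by
        rw [hmarginal, variance_const_mul]
    _ ≤ (1 / (T : ℝ)) ^ 2 * (#(univ : Finset (Fin T)) * ∑ t, Var[g t; μ₁]) := by
        gcongr
        exact variance_sum_le_card_mul fun t _ ↦ (hε t).integral_prod_left_two
    _ = v := by
        simp only [hg, sum_const, card_univ, Fintype.card_fin, nsmul_eq_mul]
        field_simp
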